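/- arXiv:2604.14670 — 2 statements merged into one kernel-verified Lean document; each statement's English description precedes it below -/
import Mathlib

section
/- A finite simple graph G admits an orientation in which every vertex has out-degree at most k if and only if Mad(G) ≤ 2k. -/
/-!
An orientation of a simple graph assigns to each edge one of its two endpoints as the
*tail* (the edge is directed away from the tail).  The out-degree of `v` is the number of
edges whose tail is `v`.  An orientation is proper if adjacent vertices get distinct
out-degrees.  The proper orientation number is the least possible maximum out-degree of a
proper orientation, and `mad G` is the maximum average degree of `G`.
-/

/-- An orientation of a simple graph `G`: each edge is assigned a tail (source endpoint),
i.e. one of its two possible directions. -/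
structure GraphOrientation {V : Type*} (G : SimpleGraph V) where
  tail : G.edgeSet → V
  tail_mem : ∀ e : G.edgeSet, tail e ∈ (e : Sym2 V)

/-- The out-degree of a vertex `v`: the number of edges directed away from `v`. -/
noncomputable def GraphOrientation.outDeg {V : Type*} {G : SimpleGraph V}
    (D : GraphOrientation G) (v : V) : ℕ :=
  {e : G.edgeSet | D.tail e = v}.ncard

/-- An orientation is proper if adjacent vertices have distinct out-degrees. -/
def GraphOrientation.Proper {V : Type*} {G : SimpleGraph V} (D : GraphOrientation G) : Prop :=
  ∀ ⦃u v : V⦄, G.Adj u v → D.outDeg u ≠ D.outDeg v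

/-- The maximum out-degree `Δ⁺(D)` of an orientation `D`. -/
noncomputable def GraphOrientation.maxOutDeg {V : Type*} [Fintype V] {G : SimpleGraph V}
    (D : GraphOrientation G) : ℕ :=
  Finset.univ.sup D.outDeg

/-- The proper orientation number `χ⃗(G)`: the minimum of `Δ⁺(D)` over all proper
orientations `D` of `G`. -/
noncomputable def properOrientNum {V : Type*} [Fintype V] (G : SimpleGraph V) : ℕ :=
  sInf {n : ℕ | ∃ D : GraphOrientation G, D.Proper ∧ D.maxOutDeg = n}

/-- The maximum average degree `Mad(G)`: the maximum of `2|E(H)|/|V(H)|` over all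
subgraphs `H` of `G` with nonempty vertex set. -/
noncomputable def mad {V : Type*} (G : SimpleGraph V) : ℝ :=
  sSup {x : ℝ | ∃ H : G.Subgraph, H.verts.Nonempty ∧
    x = 2 * (H.edgeSet.ncard : ℝ) / (H.verts.ncard : ℝ)}


/-!
Give every vertex `k` slots. An orientation with all out-degrees at most `k` is the same as an
injective assignment of each edge to a slot at one of its endpoints (the tail). By Hall's
theorem such an assignment exists iff every finite set `s` of edges has `|s| ≤ k |V(s)|`, where
`V(s)` is the set of endpoints; comparing with induced subgraphs, this says `|E(H)| ≤ k |V(H)|`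
for every subgraph `H`, which is `Mad(G) ≤ 2k`.
-/

open Finset

lemma exists_injective_prod_fin_iff_ncard_fiber_le {α β : Type*} [Finite α] (g : α → β)
    (k : ℕ) :
    (∃ f : α → β × Fin k, Function.Injective f ∧ ∀ a, (f a).1 = g a) ↔
      ∀ b, {a | g a = b}.ncard ≤ k := by
  constructor
  · rintro ⟨f, hf, hfg⟩ b
    have slot_injective : Function.Injective fun a : {a | g a = b} => (f a).2 :=
      fun a a' h => Subtype.ext <| hf <| Prod.ext (by simp only [hfg]; exact a.2.trans a'.2.symm) h
    rw [← Nat.card_coe_set_eq, ← Nat.card_fin k]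
    exact Nat.card_le_card_of_injective _ slot_injective
  · intro h
    let slot (b : β) : {a // g a = b} ↪ Fin k :=
      (Finite.equivFin _).toEmbedding.trans (Fin.castLEEmb (Nat.card_coe_set_eq _ ▸ h b))
    let f : α ↪ β × Fin k := (Equiv.sigmaFiberEquiv g).symm.toEmbedding.trans <|
      (Function.Embedding.sigmaMap (Function.Embedding.refl β) slot).trans
        (Equiv.sigmaEquivProd β (Fin k)).toEmbedding
    exact ⟨f, f.injective, fun _ => rfl⟩

section

variable {V : Type*} {G : SimpleGraph V}

lemma GraphOrientation.exists_outDeg_le_iff_exists_injective [Finite V] (k : ℕ) :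
    (∃ D : GraphOrientation G, ∀ v, D.outDeg v ≤ k) ↔
      ∃ f : G.edgeSet → V × Fin k,
        Function.Injective f ∧ ∀ e : G.edgeSet, (f e).1 ∈ (e : Sym2 V) := by
  constructor
  · rintro ⟨D, hD⟩
    obtain ⟨f, hf, hfD⟩ := (exists_injective_prod_fin_iff_ncard_fiber_le D.tail k).mpr hD
    exact ⟨f, hf, fun e => hfD e ▸ D.tail_mem e⟩
  · rintro ⟨f, hf, hfe⟩
    exact ⟨⟨fun e => (f e).1, hfe⟩,
      (exists_injective_prod_fin_iff_ncard_fiber_le _ k).mp ⟨f, hf, fun _ => rfl⟩⟩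

lemma SimpleGraph.exists_injective_slot_iff_forall_card_le [DecidableEq V] (k : ℕ) :
    (∃ f : G.edgeSet → V × Fin k,
        Function.Injective f ∧ ∀ e : G.edgeSet, (f e).1 ∈ (e : Sym2 V)) ↔
      ∀ s : Finset G.edgeSet, #s ≤ k * #(s.biUnion fun e => (e : Sym2 V).toFinset) := by
  let slots (e : G.edgeSet) : Finset (V × Fin k) := (e : Sym2 V).toFinset ×ˢ univ
  have mem_slots (e : G.edgeSet) (p : V × Fin k) : p ∈ slots e ↔ p.1 ∈ (e : Sym2 V) := by
    simp [slots]
  have card_biUnion_slots (s : Finset G.edgeSet) :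
      #(s.biUnion slots) = k * #(s.biUnion fun e => (e : Sym2 V).toFinset) := by
    rw [show s.biUnion slots = (s.biUnion fun e => (e : Sym2 V).toFinset) ×ˢ univ by
        ext; simp [slots],
      card_product, card_univ, Fintype.card_fin, mul_comm]
  simp_rw [← mem_slots, ← card_biUnion_slots]
  exact (all_card_le_biUnion_card_iff_exists_injective slots).symm

lemma SimpleGraph.forall_card_le_iff_forall_subgraph [Finite V] [DecidableEq V] (k : ℕ) :
    (∀ s : Finset G.edgeSet, #s ≤ k * #(s.biUnion fun e => (e : Sym2 V).toFinset)) ↔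
      ∀ H : G.Subgraph, H.edgeSet.ncard ≤ k * H.verts.ncard := by
  constructor
  · intro h H
    let s := (Set.toFinite {e : G.edgeSet | (e : Sym2 V) ∈ H.edgeSet}).toFinset
    have card_s : #s = H.edgeSet.ncard := by
      rw [← Set.ncard_eq_toFinset_card]
      exact Set.ncard_preimage_of_injective_subset_range Subtype.val_injective
        (by simpa using H.edgeSet_subset)
    have verts_s : (↑(s.biUnion fun e => (e : Sym2 V).toFinset) : Set V) ⊆ H.verts := by
      intro v hv
      simp only [coe_biUnion, Set.mem_iUnion, mem_coe, Sym2.mem_toFinset, s,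
        Set.Finite.mem_toFinset] at hv
      obtain ⟨e, he, hv⟩ := hv
      exact H.mem_verts_of_mem_edge he hv
    calc H.edgeSet.ncard = #s := card_s.symm
      _ ≤ k * #(s.biUnion fun e => (e : Sym2 V).toFinset) := h s
      _ ≤ k * H.verts.ncard := by
        gcongr
        rw [← Set.ncard_coe_finset]
        exact Set.ncard_le_ncard verts_s
  · intro h s
    set S := s.biUnion fun e => (e : Sym2 V).toFinset
    let H := (⊤ : G.Subgraph).induce S
    have edges_H : (↑(s.map (Function.Embedding.subtype _)) : Set (Sym2 V)) ⊆ H.edgeSet := by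
      intro e he
      obtain ⟨⟨e, he_G⟩, he_s, rfl⟩ : ∃ a ∈ s, (a : Sym2 V) = e := by simpa using he
      have mem_S (v : V) (hv : v ∈ e) : v ∈ S :=
        mem_biUnion.mpr ⟨_, he_s, Sym2.mem_toFinset.mpr hv⟩
      induction e using Sym2.ind with
      | _ u v => exact ⟨mem_S u (Sym2.mem_mk_left u v), mem_S v (Sym2.mem_mk_right u v), he_G⟩
    calc #s = #(s.map (Function.Embedding.subtype _)) := (card_map _).symm
      _ ≤ H.edgeSet.ncard := by
        rw [← Set.ncard_coe_finset]
        exact Set.ncard_le_ncard edges_H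
      _ ≤ k * H.verts.ncard := h H
      _ = k * #S := by rw [SimpleGraph.Subgraph.induce_verts, Set.ncard_coe_finset]

lemma le_mad [Finite V] (H : G.Subgraph) (hH : H.verts.Nonempty) :
    2 * (H.edgeSet.ncard : ℝ) / H.verts.ncard ≤ mad G := by
  refine le_csSup ⟨2 * G.edgeSet.ncard, ?_⟩ ⟨H, hH, rfl⟩
  rintro _ ⟨H', hH', rfl⟩
  have one_le_verts : (1 : ℝ) ≤ H'.verts.ncard := by exact_mod_cast (Set.ncard_pos).mpr hH'
  calc 2 * (H'.edgeSet.ncard : ℝ) / H'.verts.ncard ≤ 2 * H'.edgeSet.ncard :=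
        div_le_self (by positivity) one_le_verts
    _ ≤ 2 * G.edgeSet.ncard := by
        gcongr 2 * (?_ : ℝ)
        exact_mod_cast Set.ncard_le_ncard H'.edgeSet_subset

lemma mad_le_iff [Finite V] {c : ℝ} (hc : 0 ≤ c) :
    mad G ≤ c ↔ ∀ H : G.Subgraph, 2 * (H.edgeSet.ncard : ℝ) ≤ c * H.verts.ncard := by
  constructor
  · intro h H
    by_cases hH : H.verts.Nonempty
    · have verts_pos : (0 : ℝ) < H.verts.ncard := by exact_mod_cast (Set.ncard_pos).mpr hH
      rw [← div_le_iff₀ verts_pos]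
      exact (le_mad H hH).trans h
    · rw [← H.ne_bot_iff_nonempty_verts, not_not] at hH
      simp [hH]
  · intro h
    refine Real.sSup_le ?_ hc
    rintro _ ⟨H, hH, rfl⟩
    rw [div_le_iff₀ (by exact_mod_cast (Set.ncard_pos).mpr hH)]
    exact h H

end

/-- Hakimi's theorem: a finite simple graph `G` admits an orientation in which every
vertex has out-degree at most `k` if and only if `Mad(G) ≤ 2k`. -/
theorem exists_orientation_maxOutDeg_le_iff_mad_le {V : Type*} [Fintype V]
    (G : SimpleGraph V) (k : ℕ) :
    (∃ D : GraphOrientation G, ∀ v : V, D.outDeg v ≤ k) ↔ mad G ≤ 2 * k := by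
  classical
  rw [GraphOrientation.exists_outDeg_le_iff_exists_injective,
    G.exists_injective_slot_iff_forall_card_le, G.forall_card_le_iff_forall_subgraph,
    mad_le_iff (by positivity)]
  refine forall_congr' fun H => ?_
  rw [mul_assoc]
  exact_mod_cast (Nat.mul_le_mul_left_iff two_pos).symm
end

section
/- For every positive integer k, the complete bipartite graph K_{2k−1,2k−1} satisfies χ⃗(K_{2k−1,2k−1}) = k: there is a proper orientation in which every vertex of one part has out-degree k and every vertex of the other part has out-degree k − 1, and no proper orientation has maximum out-degree less than k. -/
/-!
Any orientation of `K_{n,n}` distributes its `n²` edges as out-degrees over `2n` vertices, so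
its maximum out-degree is at least `n / 2`, i.e. at least `k` when `n = 2k - 1`. Conversely,
orient the edge between `u` on the left and `v` on the right away from `u` exactly when
`(v - u) mod n < k`: every left vertex then has out-degree `k` and every right vertex
`n - k = k - 1`, which is a proper orientation with maximum out-degree `k`.
-/

namespace GraphOrientation

variable {V : Type*} {G : SimpleGraph V}

theorem sum_outDeg [Fintype V] (D : GraphOrientation G) :
    ∑ v, D.outDeg v = G.edgeSet.ncard := by
  classical
  rw [← Nat.card_coe_set_eq, Nat.card_eq_fintype_card, ← Finset.card_univ,
    Finset.card_eq_sum_card_fiberwise (f := D.tail) fun _ _ => Finset.mem_univ _]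
  simp [outDeg, Set.ncard_eq_toFinset_card']

theorem ncard_edgeSet_le_card_mul_maxOutDeg [Fintype V] (D : GraphOrientation G) :
    G.edgeSet.ncard ≤ Fintype.card V * D.maxOutDeg := by
  rw [← D.sum_outDeg, ← smul_eq_mul, ← Finset.card_univ]
  exact Finset.sum_le_card_nsmul _ _ _ fun v hv => Finset.le_sup hv

section CompleteBipartite

variable {α β : Type*}

theorem card_mul_card_le_maxOutDeg_completeBipartite [Fintype α] [Fintype β]
    (D : GraphOrientation (completeBipartiteGraph α β)) :
    Fintype.card α * Fintype.card β ≤ (Fintype.card α + Fintype.card β) * D.maxOutDeg := by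
  have h := D.ncard_edgeSet_le_card_mul_maxOutDeg
  rwa [Set.ncard_def, SimpleGraph.encard_edgeSet_completeBipartiteGraph,
    ENat.card_eq_coe_fintype_card, ENat.card_eq_coe_fintype_card, ← ENat.natCast_mul,
    ENat.toNat_natCast, Fintype.card_sum] at h

theorem le_maxOutDeg_completeBipartite_odd (k : ℕ)
    (D : GraphOrientation (completeBipartiteGraph (Fin (2 * k - 1)) (Fin (2 * k - 1)))) :
    k ≤ D.maxOutDeg := by
  have h := D.card_mul_card_le_maxOutDeg_completeBipartite
  simp only [Fintype.card_fin] at h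
  rcases Nat.eq_zero_or_pos (2 * k - 1) with hn | hn
  · omega
  · have : 2 * k - 1 ≤ 2 * D.maxOutDeg := Nat.le_of_mul_le_mul_left (by linarith) hn
    omega

theorem proper_completeBipartite {p q : ℕ} (D : GraphOrientation (completeBipartiteGraph α β))
    (hα : ∀ a, D.outDeg (.inl a) = p) (hβ : ∀ b, D.outDeg (.inr b) = q) (hpq : p ≠ q) :
    D.Proper := by
  rintro (a | b) (a' | b') hadj <;> simp_all [hpq.symm]

end CompleteBipartite

end GraphOrientation

theorem properOrientNum_eq {V : Type*} [Fintype V] {G : SimpleGraph V} {m : ℕ}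
    (D : GraphOrientation G) (hD : D.Proper) (hm : D.maxOutDeg ≤ m)
    (hlow : ∀ D' : GraphOrientation G, D'.Proper → m ≤ D'.maxOutDeg) :
    properOrientNum G = m := by
  have hmem : D.maxOutDeg ∈ {n | ∃ D : GraphOrientation G, D.Proper ∧ D.maxOutDeg = n} :=
    ⟨D, hD, rfl⟩
  refine le_antisymm ((Nat.sInf_le hmem).trans hm) (le_csInf ⟨_, hmem⟩ ?_)
  rintro n ⟨D', hD', rfl⟩
  exact hlow D' hD'

section OfRel

variable {α β : Type*}

noncomputable def completeBipartiteEdgeEquiv (α β : Type*) :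
    α × β ≃ (completeBipartiteGraph α β).edgeSet :=
  (Equiv.ofInjective (fun p : α × β => s(.inl p.1, .inr p.2)) (by
    rintro ⟨a, b⟩ ⟨a', b'⟩ h
    simpa using h)).trans (Equiv.setCongr SimpleGraph.edgeSet_completeBipartiteGraph.symm)

@[simp]
theorem coe_completeBipartiteEdgeEquiv (p : α × β) :
    (completeBipartiteEdgeEquiv α β p : Sym2 (α ⊕ β)) = s(.inl p.1, .inr p.2) := rfl

noncomputable def GraphOrientation.ofRel (r : α → β → Prop) [DecidableRel r] :
    GraphOrientation (completeBipartiteGraph α β) where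
  tail e :=
    let p := (completeBipartiteEdgeEquiv α β).symm e
    if r p.1 p.2 then .inl p.1 else .inr p.2
  tail_mem e := by
    obtain ⟨p, rfl⟩ := (completeBipartiteEdgeEquiv α β).surjective e
    simp only [Equiv.symm_apply_apply, coe_completeBipartiteEdgeEquiv]
    split_ifs <;> simp

namespace GraphOrientation

variable (r : α → β → Prop) [DecidableRel r]

theorem outDeg_ofRel (x : α ⊕ β) : (ofRel r).outDeg x =
    {p : α × β | (if r p.1 p.2 then .inl p.1 else .inr p.2 : α ⊕ β) = x}.ncard := by
  rw [outDeg, ← Equiv.image_preimage (completeBipartiteEdgeEquiv α β) {e | _ = x},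
    Set.ncard_image_of_injective _ (Equiv.injective _)]
  simp [Set.preimage, ofRel]

theorem outDeg_ofRel_inl (a : α) : (ofRel r).outDeg (.inl a) = {b | r a b}.ncard := by
  rw [outDeg_ofRel, ← Set.ncard_image_of_injective {b | r a b} (Prod.mk_right_injective a)]
  refine congrArg Set.ncard (Set.ext fun ⟨a', b⟩ => ?_)
  by_cases r a' b <;> aesop

theorem outDeg_ofRel_inr (b : β) : (ofRel r).outDeg (.inr b) = {a | ¬ r a b}.ncard := by
  rw [outDeg_ofRel, ← Set.ncard_image_of_injective {a | ¬ r a b} (Prod.mk_left_injective b)]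
  refine congrArg Set.ncard (Set.ext fun ⟨a, b'⟩ => ?_)
  by_cases r a b' <;> aesop

end GraphOrientation

end OfRel

theorem Fin.ncard_setOf_val_lt {n k : ℕ} (hk : k ≤ n) : {i : Fin n | (i : ℕ) < k}.ncard = k := by
  classical
  rw [Set.ncard_eq_toFinset_card', Set.toFinset_ofPred, Fin.card_filter_val_lt, min_eq_right hk]

theorem Fin.ncard_setOf_val_apply_lt {n k : ℕ} (e : Fin n ≃ Fin n) (hk : k ≤ n) :
    {i | (e i : ℕ) < k}.ncard = k :=
  calc {i | (e i : ℕ) < k}.ncard = {i : Fin n | (i : ℕ) < k}.ncard :=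
        Set.ncard_preimage_of_injective_subset_range (s := {i : Fin n | (i : ℕ) < k})
          e.injective (by simp)
    _ = k := Fin.ncard_setOf_val_lt hk

noncomputable def cyclicOrientation (n k : ℕ) :
    GraphOrientation (completeBipartiteGraph (Fin n) (Fin n)) :=
  .ofRel fun u v => ((v - u : Fin n) : ℕ) < k

section Cyclic

variable {n k : ℕ} [NeZero n]

theorem outDeg_cyclicOrientation_inl (hk : k ≤ n) (u : Fin n) :
    (cyclicOrientation n k).outDeg (.inl u) = k := by
  rw [cyclicOrientation, GraphOrientation.outDeg_ofRel_inl]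
  exact Fin.ncard_setOf_val_apply_lt (Equiv.subRight u) hk

theorem outDeg_cyclicOrientation_inr (hk : k ≤ n) (v : Fin n) :
    (cyclicOrientation n k).outDeg (.inr v) = n - k := by
  rw [cyclicOrientation, GraphOrientation.outDeg_ofRel_inr, ← Set.compl_ofPred, Set.ncard_compl,
    Nat.card_eq_fintype_card, Fintype.card_fin]
  exact congrArg (n - ·) (Fin.ncard_setOf_val_apply_lt (Equiv.subLeft v) hk)

end Cyclic

/-- For every `k ≥ 1`, the complete bipartite graph `K_{2k−1,2k−1}` has proper
orientation number exactly `k`: there is a proper orientation in which every vertex of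
one part has out-degree `k` and every vertex of the other part has out-degree `k − 1`,
and no proper orientation has maximum out-degree less than `k`. -/
theorem properOrientNum_completeBipartite (k : ℕ) (hk : 1 ≤ k) :
    properOrientNum (completeBipartiteGraph (Fin (2 * k - 1)) (Fin (2 * k - 1))) = k ∧
    (∃ D : GraphOrientation (completeBipartiteGraph (Fin (2 * k - 1)) (Fin (2 * k - 1))),
      D.Proper ∧ (∀ u : Fin (2 * k - 1), D.outDeg (Sum.inl u) = k) ∧
        (∀ v : Fin (2 * k - 1), D.outDeg (Sum.inr v) = k - 1)) ∧
    (∀ D : GraphOrientation (completeBipartiteGraph (Fin (2 * k - 1)) (Fin (2 * k - 1))),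
      D.Proper → k ≤ D.maxOutDeg) := by
  have : NeZero (2 * k - 1) := ⟨by omega⟩
  have hinl := outDeg_cyclicOrientation_inl (n := 2 * k - 1) (k := k) (by omega)
  have hinr : ∀ v, (cyclicOrientation (2 * k - 1) k).outDeg (.inr v) = k - 1 := fun v => by
    rw [outDeg_cyclicOrientation_inr (by omega)]
    omega
  have hproper := (cyclicOrientation (2 * k - 1) k).proper_completeBipartite hinl hinr (by omega)
  have hmax : (cyclicOrientation (2 * k - 1) k).maxOutDeg ≤ k := by
    refine Finset.sup_le fun x _ => ?_
    rcases x with u | v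
    · exact (hinl u).le
    · exact (hinr v).trans_le (Nat.sub_le k 1)
  have hlow := fun D : GraphOrientation _ => D.le_maxOutDeg_completeBipartite_odd k
  exact ⟨properOrientNum_eq _ hproper hmax fun D _ => hlow D, ⟨_, hproper, hinl, hinr⟩,
    fun D _ => hlow D⟩
end
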